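/- For any single-elimination tournament T and any two distinct players a, b of T, there exists a unique match x which has two in-neighbors u_a, u_b with P(u_a) ∩ {a,b} = {a} and P(u_b) ∩ {a,b} = {b}. -/
import Mathlib


namespace SETour

variable {V : Type*}

/-- `a` is a player, i.e. a source of the digraph. -/
def IsPlayer (adj : V → V → Prop) (a : V) : Prop := ∀ u, ¬ adj u a

/-- `x` is a match, i.e. a non-source vertex. -/
def IsMatch (adj : V → V → Prop) (x : V) : Prop := ¬ IsPlayer adj x

/-- `z` is a sink, i.e. has no out-neighbors. -/
def IsSink (adj : V → V → Prop) (z : V) : Prop := ∀ w, ¬ adj z w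

/-- A single-elimination tournament: exactly one sink, every non-sink vertex has
exactly one out-neighbor (at most one out-neighbor in general), no directed cycles,
and no vertex has exactly one in-neighbor. -/
structure IsSETournament (adj : V → V → Prop) : Prop where
  unique_sink : ∃! z, IsSink adj z
  out_unique : ∀ ⦃v w w'⦄, adj v w → adj v w' → w = w'
  acyclic : ∀ v, ¬ Relation.TransGen adj v v
  in_ne_one : ∀ v, {u | adj u v}.ncard ≠ 1

/-- The set of players of the tournament. -/
def players (adj : V → V → Prop) : Set V := {a | IsPlayer adj a}

/-- The player set `P(u)`: all players having a directed walk to `u`. -/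
def playerSet (adj : V → V → Prop) (u : V) : Set V :=
  {a | IsPlayer adj a ∧ Relation.ReflTransGen adj a u}

/-- A bracket: a function from vertices to players fixing players, in which the
winner of each match is the winner of one of the matches feeding into it. -/
structure IsBracket (adj : V → V → Prop) (B : V → V) : Prop where
  toPlayer : ∀ v, IsPlayer adj (B v)
  player_fix : ∀ a, IsPlayer adj a → B a = a
  match_pred : ∀ x, IsMatch adj x → ∃ u, adj u x ∧ B x = B u

/-- A scoring system: positive reals on matches. -/
def IsScoring (adj : V → V → Prop) (σ : V → ℝ) : Prop :=
  ∀ x, IsMatch adj x → 0 < σ x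

/-- The σ-score of two brackets: the sum of σ over the matches on which they agree. -/
noncomputable def score (adj : V → V → Prop) (σ : V → ℝ) (B B' : V → V) : ℝ :=
  ∑ᶠ x ∈ {x | IsMatch adj x ∧ B x = B' x}, σ x

/-- A set of brackets is σ-resolving if any two distinct brackets are
distinguished by their σ-score against some member of the set. -/
def IsResolving (adj : V → V → Prop) (σ : V → ℝ) (𝓑 : Set (V → V)) : Prop :=
  ∀ B B' : V → V, IsBracket adj B → IsBracket adj B' → B ≠ B' →
    ∃ Bi ∈ 𝓑, score adj σ Bi B ≠ score adj σ Bi B'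

/-- The metric dimension: minimum size of a σ-resolving set of brackets. -/
noncomputable def dimT (adj : V → V → Prop) (σ : V → ℝ) : ℕ :=
  sInf {n | ∃ 𝓑 : Set (V → V), (∀ B ∈ 𝓑, IsBracket adj B) ∧
    IsResolving adj σ 𝓑 ∧ 𝓑.ncard = n}

/-- The resolving number: minimum `r` such that every set of `r` distinct
brackets is σ-resolving. -/
noncomputable def resT (adj : V → V → Prop) (σ : V → ℝ) : ℕ :=
  sInf {r | ∀ 𝓑 : Set (V → V), (∀ B ∈ 𝓑, IsBracket adj B) → 𝓑.ncard = r →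
    IsResolving adj σ 𝓑}

/-- `x` is the match where players `a` and `b` face off: it has in-neighbors
`u_a, u_b` with `P(u_a) ∩ {a,b} = {a}` and `P(u_b) ∩ {a,b} = {b}`. -/
def IsPairMatch (adj : V → V → Prop) (a b x : V) : Prop :=
  ∃ ua ub, adj ua x ∧ adj ub x ∧
    playerSet adj ua ∩ {a, b} = {a} ∧ playerSet adj ub ∩ {a, b} = {b}

open Classical in
/-- The bracket obtained from `B` by making player `a` win every match it can. -/
noncomputable def favBracket (adj : V → V → Prop) (B : V → V) (a : V) : V → V :=
  fun u => if a ∈ playerSet adj u then a else B u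

/-- A scoring system has distinct subset sums if distinct sets of matches have
distinct total scores. -/
def DistinctSubsetSums (adj : V → V → Prop) (σ : V → ℝ) : Prop :=
  ∀ M M' : Set V, (∀ x ∈ M, IsMatch adj x) → (∀ x ∈ M', IsMatch adj x) →
    ∑ᶠ x ∈ M, σ x = ∑ᶠ x ∈ M', σ x → M = M'

/-- The quantity `max_{x ∈ M(T)} (|P(x)| − max_{u ∈ N⁻(x)} |P(u)|)`. -/
noncomputable def lbound (adj : V → V → Prop) : ℕ :=
  sSup {k | ∃ x, IsMatch adj x ∧
    k = (playerSet adj x).ncard - sSup {m | ∃ u, adj u x ∧ m = (playerSet adj u).ncard}}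

/-- The vertex set of the sub-tournament `T_u`: vertices `v` with `P(v) ⊆ P(u)`. -/
def subVert (adj : V → V → Prop) (u : V) : Set V :=
  {v | playerSet adj v ⊆ playerSet adj u}

/-- The adjacency relation of the sub-tournament `T_u`. -/
def subAdj (adj : V → V → Prop) (u : V) : subVert adj u → subVert adj u → Prop :=
  fun v w => adj v.1 w.1

/-- A standard single-elimination tournament: one obtained from a complete
(perfect) binary tree by orienting all edges towards its root.  Equivalently, a
single-elimination tournament in which every match has exactly two in-neighbors
and all players are at the same distance from the sink (witnessed by a depth
function decreasing by 1 along every edge and constant on players). -/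
def IsStandard (adj : V → V → Prop) : Prop :=
  IsSETournament adj ∧
  (∀ x, IsMatch adj x → {u | adj u x}.ncard = 2) ∧
  ∃ (d : V → ℕ) (r : ℕ), (∀ v w, adj v w → d v = d w + 1) ∧
    ∀ a, IsPlayer adj a → d a = r

section Aux
variable {adj : V → V → Prop} (hT : IsSETournament adj)

lemma rtg_ne_transGen {u v : V} (h : Relation.ReflTransGen adj u v) (hne : u ≠ v) :
    Relation.TransGen adj u v := by
  rcases Relation.ReflTransGen.cases_head h with rfl | ⟨w, hw, hwv⟩
  · exact absurd rfl hne
  · exact Relation.TransGen.head' hw hwv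

include hT in
lemma wf_transGen [Finite V] : WellFounded (Relation.TransGen adj) := by
  have h1 : IsIrrefl V (Relation.TransGen adj) := ⟨hT.acyclic⟩
  have h2 : IsTrans V (Relation.TransGen adj) := ⟨fun _ _ _ => Relation.TransGen.trans⟩
  exact Finite.wellFounded_of_trans_of_irrefl _

include hT in
lemma wf_transGen_swap [Finite V] : WellFounded (fun u v => Relation.TransGen adj v u) := by
  have h1 : IsIrrefl V (fun u v => Relation.TransGen adj v u) := ⟨hT.acyclic⟩
  have h2 : IsTrans V (fun u v => Relation.TransGen adj v u) :=
    ⟨fun _ _ _ h h' => Relation.TransGen.trans h' h⟩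
  exact Finite.wellFounded_of_trans_of_irrefl _

include hT in
lemma comparability {v x y : V} (hx : Relation.ReflTransGen adj v x)
    (hy : Relation.ReflTransGen adj v y) :
    Relation.ReflTransGen adj x y ∨ Relation.ReflTransGen adj y x := by
  induction hx using Relation.ReflTransGen.head_induction_on with
  | refl => exact Or.inl hy
  | head h hrest ih =>
    rcases Relation.ReflTransGen.cases_head hy with rfl | ⟨w, hw, hwy⟩
    · exact Or.inr (Relation.ReflTransGen.head h hrest)
    · exact ih ((hT.out_unique h hw) ▸ hwy)

include hT in
lemma rtg_antisymm {x y : V} (h1 : Relation.ReflTransGen adj x y)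
    (h2 : Relation.ReflTransGen adj y x) : x = y := by
  by_contra hne
  exact hT.acyclic x (Relation.TransGen.trans_left (rtg_ne_transGen h1 hne) h2)

include hT in
lemma reach_sink [Finite V] {z : V} (hz : IsSink adj z)
    (hzu : ∀ y, IsSink adj y → y = z) : ∀ v, Relation.ReflTransGen adj v z := by
  intro v
  induction v using (wf_transGen_swap hT).induction with
  | _ v ih =>
    by_cases hv : IsSink adj v
    · exact (hzu v hv) ▸ Relation.ReflTransGen.refl
    · simp only [IsSink, not_forall, not_not] at hv
      obtain ⟨w, hw⟩ := hv
      exact Relation.ReflTransGen.head hw (ih w (Relation.TransGen.single hw))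

lemma rtg_to_player {u c : V} (hc : IsPlayer adj c)
    (h : Relation.ReflTransGen adj u c) : u = c := by
  rcases Relation.ReflTransGen.cases_tail h with rfl | ⟨d, _, hd⟩
  · rfl
  · exact absurd hd (hc d)

end Aux


/-- For any two distinct players there is a unique match `x` with
in-neighbors `u_a, u_b` such that `P(u_a) ∩ {a,b} = {a}` and `P(u_b) ∩ {a,b} = {b}`. -/
theorem statement_10 {V : Type*} [Finite V] (adj : V → V → Prop)
    (hT : IsSETournament adj)
    (a b : V) (ha : IsPlayer adj a) (hb : IsPlayer adj b) (hab : a ≠ b) :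
    ∃! x, IsMatch adj x ∧ IsPairMatch adj a b x := by

  classical
  obtain ⟨z, hz, hzu⟩ := hT.unique_sink
  have hreach := reach_sink hT hz hzu
  set S : Set V := {v | Relation.ReflTransGen adj a v ∧ Relation.ReflTransGen adj b v} with hS
  have hSne : S.Nonempty := ⟨z, hreach a, hreach b⟩
  obtain ⟨x, hxS, hxmin⟩ := (wf_transGen hT).has_min S hSne
  -- x is the least element of S
  have hleast : ∀ v ∈ S, Relation.ReflTransGen adj x v := by
    intro v hv
    rcases comparability hT hxS.1 hv.1 with h | h
    · exact h
    · rcases eq_or_ne v x with rfl | hne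
      · exact Relation.ReflTransGen.refl
      · exact absurd (rtg_ne_transGen h hne) (hxmin v hv)
  have hxa : x ≠ a := by
    rintro rfl
    exact hab ((rtg_to_player ha hxS.2).symm)
  have hxb : x ≠ b := by
    rintro rfl
    exact hab (rtg_to_player hb hxS.1)
  obtain ⟨ua, hua, huax⟩ :=
    (Relation.ReflTransGen.cases_tail hxS.1).resolve_left hxa
  obtain ⟨ub, hub, hubx⟩ :=
    (Relation.ReflTransGen.cases_tail hxS.2).resolve_left hxb
  have hbua : b ∉ playerSet adj ua := by
    rintro ⟨-, hr⟩
    exact hT.acyclic x (Relation.TransGen.tail' (hleast ua ⟨hua, hr⟩) huax)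
  have haub : a ∉ playerSet adj ub := by
    rintro ⟨-, hr⟩
    exact hT.acyclic x (Relation.TransGen.tail' (hleast ub ⟨hr, hub⟩) hubx)
  have inter : ∀ (u c d : V), IsPlayer adj c → Relation.ReflTransGen adj c u →
      d ∉ playerSet adj u → playerSet adj u ∩ {c, d} = {c} := by
    intro u c d hc hcu hdu
    ext v
    simp only [Set.mem_inter_iff, Set.mem_insert_iff, Set.mem_singleton_iff]
    constructor
    · rintro ⟨hv, rfl | rfl⟩
      · rfl
      · exact absurd hv hdu
    · rintro rfl
      exact ⟨⟨hc, hcu⟩, Or.inl rfl⟩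
  have hmatch : IsMatch adj x := fun h => h ua huax
  refine ⟨x, ⟨hmatch, ua, ub, huax, hubx, inter ua a b ha hua hbua, ?_⟩, ?_⟩
  · have : playerSet adj ub ∩ {b, a} = {b} := inter ub b a hb hub haub
    rwa [Set.pair_comm b a] at this
  · rintro x' ⟨hm', ua', ub', hua'x, hub'x, hia, hib⟩
    -- extract: a reaches ua', b ∉ P(ua'); b reaches ub', a ∉ P(ub')
    have haua' : Relation.ReflTransGen adj a ua' := by
      have h0 : a ∈ ({a} : Set V) := rfl
      rw [← hia] at h0
      exact h0.1.2
    have hbua' : b ∉ playerSet adj ua' := by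
      intro hmem
      have h0 : b ∈ playerSet adj ua' ∩ {a, b} := ⟨hmem, Or.inr rfl⟩
      rw [hia] at h0
      exact hab h0.symm
    have hbub' : Relation.ReflTransGen adj b ub' := by
      have h0 : b ∈ ({b} : Set V) := rfl
      rw [← hib] at h0
      exact h0.1.2
    have hax' : Relation.ReflTransGen adj a x' := haua'.tail hua'x
    have hbx' : Relation.ReflTransGen adj b x' := hbub'.tail hub'x
    have hx'S : x' ∈ S := ⟨hax', hbx'⟩
    have hxx' : Relation.ReflTransGen adj x x' := hleast x' hx'S
    -- compare x and ua', both reachable from a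
    rcases comparability hT hxS.1 haua' with h | h
    · exact absurd ⟨hb, hxS.2.trans h⟩ hbua'
    · rcases Relation.ReflTransGen.cases_head h with rfl | ⟨w, hw, hwx⟩
      · exact absurd ⟨hb, hxS.2⟩ hbua'
      · have hw' : w = x' := hT.out_unique hw hua'x
        subst hw'
        exact (rtg_antisymm hT hxx' hwx).symm


end SETour
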